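/- Let g₂, g₃ ∈ ℚ and suppose the Weierstrass curve E : y² = x³ − g₂x − g₃ has nonzero discriminant. Then the set of squarefree integers D such that the Mordell–Weil group E_D(ℚ) of the quadratic twist E_D : y² = x³ − g₂D²x − g₃D³ contains a point of finite order greater than 2 is finite. -/

import Mathlib

/-!
If `P ∈ E_D(ℚ)` has finite order greater than `2`, write `P = (x, y)` and `u = x / D`. Then
`D · f(u) = (y / D)²` with `f = X³ − g₂X − g₃` and `f(u) ≠ 0`, so `D` is the squarefree part
of `f(u)` and is determined by `u`. It therefore suffices to bound the height of `u`
independently of `D`, and Northcott's theorem does the rest.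

In the coordinate `x / D` the duplication map of `E_D` is the duplication map
`u ↦ φ(u) / 4f(u)` of `E`, which does not depend on `D`, and `h(φ(u) / 4f(u)) ≥ κ h(u)⁴`
by the usual resultant argument. On the finite set of the coordinates `x(Q) / D` of the
nonzero multiples `Q` of `P`, take one of maximal height: either `Q` has order `2`, and
`x(Q) / D` is a root of `f`, or `2Q` is again in the set and `κ h⁴ ≤ h`. Either way
the maximum, and with it `h(x(P) / D)`, is bounded in terms of `E` alone.
-/

/-- The short Weierstrass curve `y² = x³ − g₂x − g₃`. -/
def shortCurve {R : Type*} [CommRing R] (g₂ g₃ : R) : WeierstrassCurve R :=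
  ⟨0, 0, 0, -g₂, -g₃⟩

/-- The quadratic twist `y² = x³ − g₂D²x − g₃D³`. -/
def twistCurve {R : Type*} [CommRing R] (g₂ g₃ D : R) : WeierstrassCurve R :=
  ⟨0, 0, 0, -(g₂ * D ^ 2), -(g₃ * D ^ 3)⟩

open Polynomial Height

theorem exists_mul_mulHeight₁_pow_le_mulHeight₁_div {K : Type*} [Field K] [AdmissibleAbsValues K]
    {M N : ℕ} {f g a₀ b₀ a₁ b₁ : K[X]} {r : K} (hr : r ≠ 0)
    (ha₀ : a₀.natDegree ≤ M) (hb₀ : b₀.natDegree ≤ M) (ha₁ : a₁.natDegree ≤ M)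
    (hb₁ : b₁.natDegree ≤ M)
    (h₀ : a₀ * f + b₀ * g = C r * X ^ (M + N)) (h₁ : a₁ * f + b₁ * g = C r) :
    ∃ κ > 0, ∀ x : K, κ * mulHeight₁ x ^ N ≤ mulHeight₁ (f.eval x / g.eval x) := by
  let cofactor : Fin 2 × Fin 2 → K[X] := fun kj ↦ C r⁻¹ * ![![a₀, b₀], ![a₁, b₁]] kj.1 kj.2
  have hdeg (kj) : (cofactor kj).natDegree ≤ M := by
    refine (natDegree_C_mul_le _ _).trans ?_
    fin_cases kj <;> assumption
  obtain ⟨κ, hκ, H⟩ := mulHeight_eval_ge' (N := N)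
    fun kj ↦ isHomogeneous_homogenize (n := M) (cofactor kj)
  refine ⟨κ, hκ, fun x ↦ ?_⟩
  have heval (kj) :
      MvPolynomial.eval ![x, 1] ((cofactor kj).homogenize M) = (cofactor kj).eval x := by
    simp [eval_homogenize (hdeg kj)]
  -- `mulHeight_eval_ge'` needs the identities only at the point, so constant `p` will do.
  have key := H ![MvPolynomial.C (f.eval x), MvPolynomial.C (g.eval x)] (x := ![x, 1]) fun k ↦ by
    have h₀' := congrArg (eval x) h₀
    have h₁' := congrArg (eval x) h₁
    simp only [eval_add, eval_mul, eval_C, eval_pow, eval_X] at h₀' h₁'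
    simp only [Fin.sum_univ_two, heval]
    fin_cases k <;> simp [cofactor] <;> field_simp
    · linear_combination h₀'
    · linear_combination h₁'
  rw [mulHeight₁_eq_mulHeight, mulHeight₁_div_eq_mulHeight]
  convert key using 2
  ext j
  fin_cases j <;> simp

noncomputable def shortCubic {R : Type*} [CommRing R] (g₂ g₃ : R) : R[X] :=
  X ^ 3 - C g₂ * X - C g₃

noncomputable def doublingNum {R : Type*} [CommRing R] (g₂ g₃ : R) : R[X] :=
  X ^ 4 + 2 * C g₂ * X ^ 2 + 8 * C g₃ * X + C g₂ ^ 2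

noncomputable def doublingX {K : Type*} [Field K] (g₂ g₃ u : K) : K :=
  (doublingNum g₂ g₃).eval u / (4 * (shortCubic g₂ g₃).eval u)

lemma shortCubic_monic {R : Type*} [CommRing R] [Nontrivial R] (g₂ g₃ : R) :
    (shortCubic g₂ g₃).Monic := by
  unfold shortCubic
  monicity!

lemma shortCurve_Δ {R : Type*} [CommRing R] (g₂ g₃ : R) :
    (shortCurve g₂ g₃).Δ = -4 * (4 * (27 * g₃ ^ 2 - 4 * g₂ ^ 3)) := by
  simp only [WeierstrassCurve.Δ, WeierstrassCurve.b₂, WeierstrassCurve.b₄,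
    WeierstrassCurve.b₆, WeierstrassCurve.b₈, shortCurve]
  ring

theorem exists_mul_mulHeight₁_pow_le_mulHeight₁_doublingX {K : Type*} [Field K]
    [AdmissibleAbsValues K] {g₂ g₃ : K} (hΔ : (shortCurve g₂ g₃).Δ ≠ 0) :
    ∃ κ > 0, ∀ u : K, κ * mulHeight₁ u ^ 4 ≤ mulHeight₁ (doublingX g₂ g₃ u) := by
  have hr : 4 * (27 * g₃ ^ 2 - 4 * g₂ ^ 3) ≠ 0 := fun h ↦ hΔ (by rw [shortCurve_Δ, h, mul_zero])
  have hCr : C (4 * (27 * g₃ ^ 2 - 4 * g₂ ^ 3)) = 4 * (27 * C g₃ ^ 2 - 4 * C g₂ ^ 3) := by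
    simp only [map_mul, map_sub, map_pow, map_ofNat]
  -- Classical cofactors putting `r` and `r X⁷` into the ideal `(φ, 4f)`,
  -- where `r = 4(27g₃² − 4g₂³) = −Δ/4`.
  have key := exists_mul_mulHeight₁_pow_le_mulHeight₁_div (M := 3) (N := 4) (f := doublingNum g₂ g₃)
    (g := 4 * shortCubic g₂ g₃) hr
    (a₀ := 4 * (27 * C g₃ ^ 2 - 4 * C g₂ ^ 3) * X ^ 3 + 4 * C g₂ ^ 2 * C g₃ * X ^ 2
      + 4 * C g₂ * (3 * C g₂ ^ 3 - 22 * C g₃ ^ 2) * X + 12 * C g₃ * (C g₂ ^ 3 - 8 * C g₃ ^ 2))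
    (b₀ := -C g₂ ^ 2 * C g₃ * X ^ 3 + C g₂ * (5 * C g₂ ^ 3 - 32 * C g₃ ^ 2) * X ^ 2
      + 2 * C g₃ * (13 * C g₂ ^ 3 - 96 * C g₃ ^ 2) * X + 3 * C g₂ ^ 2 * (C g₂ ^ 3 - 8 * C g₃ ^ 2))
    (a₁ := 12 * X ^ 2 - 16 * C g₂) (b₁ := -(3 * X ^ 3 + 5 * C g₂ * X + 27 * C g₃))
    (by compute_degree!) (by compute_degree!) (by compute_degree!) (by compute_degree!)
    (by rw [hCr, doublingNum, shortCubic]; ring) (by rw [hCr, doublingNum, shortCubic]; ring)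
  simpa [doublingX] using key

theorem Set.Finite.forall_le_of_expanding {α : Type*} {U : Set α} (hU : U.Finite)
    {h : α → ℝ} {φ : α → α} {κ T : ℝ} {N : ℕ} (hN : 2 ≤ N) (hκ : 0 < κ) (h1 : ∀ x, 1 ≤ h x)
    (hφ : ∀ x, κ * h x ^ N ≤ h (φ x)) (hUφ : ∀ x ∈ U, φ x ∈ U ∨ h x ≤ T) :
    ∀ x ∈ U, h x ≤ max κ⁻¹ T := by
  intro x hx
  obtain ⟨x₀, hx₀, hmax⟩ := Set.exists_max_image U h hU ⟨x, hx⟩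
  refine (hmax x hx).trans ?_
  rcases hUφ x₀ hx₀ with hφx₀ | hT
  · refine le_max_of_le_left ?_
    rw [← one_div, le_div_iff₀ hκ]
    have := h1 x₀
    have : h x₀ ^ 2 ≤ h x₀ ^ N := pow_le_pow_right₀ (h1 x₀) hN
    nlinarith [hφ x₀, hmax _ hφx₀]
  · exact le_max_of_le_right hT

section Twist

open WeierstrassCurve.Affine

variable {K : Type*} [Field K] {g₂ g₃ D : K}

lemma twistCurve_equation_iff (hD : D ≠ 0) {x y : K} :
    (twistCurve g₂ g₃ D).toAffine.Equation x y ↔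
      D * (shortCubic g₂ g₃).eval (x / D) = (y / D) ^ 2 := by
  rw [equation_iff]
  simp only [twistCurve, shortCubic, eval_sub, eval_pow, eval_X, eval_mul, eval_C]
  field_simp
  constructor <;> intro h <;> linear_combination -h

@[simp]
lemma twistCurve_negY (x y : K) : (twistCurve g₂ g₃ D).toAffine.negY x y = -y := by
  simp [negY, twistCurve]

lemma twistCurve_Y_ne_negY [NeZero (2 : K)] {x y : K} (hy : y ≠ 0) :
    y ≠ (twistCurve g₂ g₃ D).toAffine.negY x y := by
  rw [twistCurve_negY]
  intro h
  exact hy ((mul_eq_zero.mp (by linear_combination h : (2 : K) * y = 0)).resolve_left two_ne_zero)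

lemma twistCurve_isRoot_iff (hD : D ≠ 0) {x y : K}
    (h : (twistCurve g₂ g₃ D).toAffine.Equation x y) :
    (shortCubic g₂ g₃).IsRoot (x / D) ↔ y = 0 := by
  rw [twistCurve_equation_iff hD] at h
  rw [IsRoot.def, ← mul_eq_zero_iff_left hD, h, sq_eq_zero_iff, div_eq_zero_iff, or_iff_left hD]

lemma twistCurve_addX_div [DecidableEq K] [NeZero (2 : K)] (hD : D ≠ 0) {x y : K}
    (h : (twistCurve g₂ g₃ D).toAffine.Equation x y) (hy : y ≠ 0) :
    (twistCurve g₂ g₃ D).toAffine.addX x x ((twistCurve g₂ g₃ D).toAffine.slope x x y y) / D =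
      doublingX g₂ g₃ (x / D) := by
  have hf := (twistCurve_isRoot_iff hD h).not.mpr hy
  rw [twistCurve_equation_iff hD] at h
  simp only [IsRoot.def, shortCubic, eval_sub, eval_pow, eval_X, eval_mul, eval_C] at h hf
  have hy2 : (y - -y) ^ 2 = 4 * (x ^ 3 - g₂ * D ^ 2 * x - g₃ * D ^ 3) := by
    field_simp at h; linear_combination -4 * h
  rw [slope_of_Y_ne rfl (twistCurve_Y_ne_negY hy), twistCurve_negY, addX, doublingX]
  simp only [twistCurve, zero_mul, mul_zero, add_zero, sub_zero, div_pow, hy2]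
  simp only [doublingNum, shortCubic, eval_sub, eval_pow, eval_X, eval_mul, eval_C,
    eval_add, eval_ofNat]
  have hc : x * (x ^ 2 - g₂ * D ^ 2) - D ^ 3 * g₃ ≠ 0 := by
    contrapose! hf; field_simp; linear_combination hf
  have h4 : (4 : K) ≠ 0 := by
    rw [show (4 : K) = 2 * 2 by norm_num]; exact mul_ne_zero two_ne_zero two_ne_zero
  field_simp
  ring

lemma twistCurve_xRep_add_self_or_isRoot [DecidableEq K] [NeZero (2 : K)] (hD : D ≠ 0)
    {Q : (twistCurve g₂ g₃ D).toAffine.Point} (hQ : Q ≠ 0) :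
    (Q + Q ≠ 0 ∧ (Q + Q).xRep 0 / D = doublingX g₂ g₃ (Q.xRep 0 / D)) ∨
      (shortCubic g₂ g₃).IsRoot (Q.xRep 0 / D) := by
  cases Q with
  | zero => exact absurd rfl hQ
  | @some x y h =>
    by_cases hy : y = 0
    · exact .inr <| by simpa using (twistCurve_isRoot_iff hD h.1).mpr hy
    · rw [Point.add_self_of_Y_ne (twistCurve_Y_ne_negY hy)]
      exact .inl ⟨Point.some_ne_zero _, by simpa using twistCurve_addX_div hD h.1 hy⟩

variable [DecidableEq K] [NeZero (2 : K)] [AdmissibleAbsValues K] {κ T : ℝ}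

lemma twistCurve_mulHeight₁_le_of_mem_zmultiples (hD : D ≠ 0) (hκ : 0 < κ)
    (hgrowth : ∀ u, κ * mulHeight₁ u ^ 4 ≤ mulHeight₁ (doublingX g₂ g₃ u))
    (hT : ∀ u, (shortCubic g₂ g₃).IsRoot u → mulHeight₁ u ≤ T)
    {P Q : (twistCurve g₂ g₃ D).toAffine.Point} (hP : IsOfFinAddOrder P)
    (hQP : Q ∈ AddSubgroup.zmultiples P) (hQ : Q ≠ 0) :
    mulHeight₁ (Q.xRep 0 / D) ≤ max κ⁻¹ T := by
  let U : Set K := (fun Q ↦ Q.xRep 0 / D) '' {Q | Q ∈ AddSubgroup.zmultiples P ∧ Q ≠ 0}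
  have hU : U.Finite := (hP.finite_zmultiples.subset fun _ hQ ↦ hQ.1).image _
  have hUdbl : ∀ u ∈ U, doublingX g₂ g₃ u ∈ U ∨ mulHeight₁ u ≤ T := by
    rintro _ ⟨Q, ⟨hQP, hQ⟩, rfl⟩
    rcases twistCurve_xRep_add_self_or_isRoot hD hQ with ⟨hQQ, hx⟩ | hroot
    · exact .inl ⟨Q + Q, ⟨add_mem hQP hQP, hQQ⟩, hx⟩
    · exact .inr (hT _ hroot)
  exact hU.forall_le_of_expanding (by norm_num : 2 ≤ 4) hκ one_le_mulHeight₁ hgrowth hUdbl _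
    ⟨Q, ⟨hQP, hQ⟩, rfl⟩

theorem twistCurve_exists_isSquare_of_two_lt_addOrderOf (hD : D ≠ 0) (hκ : 0 < κ)
    (hgrowth : ∀ u, κ * mulHeight₁ u ^ 4 ≤ mulHeight₁ (doublingX g₂ g₃ u))
    (hT : ∀ u, (shortCubic g₂ g₃).IsRoot u → mulHeight₁ u ≤ T)
    {P : (twistCurve g₂ g₃ D).toAffine.Point} (hP : IsOfFinAddOrder P) (h2P : 2 < addOrderOf P) :
    ∃ u, mulHeight₁ u ≤ max κ⁻¹ T ∧ ¬ (shortCubic g₂ g₃).IsRoot u ∧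
      IsSquare (D * (shortCubic g₂ g₃).eval u) := by
  have hP0 : P ≠ 0 := by rintro rfl; simp at h2P
  have hPP : P + P ≠ 0 := fun h ↦ by
    have := Nat.le_of_dvd two_pos (addOrderOf_dvd_of_nsmul_eq_zero ((two_nsmul P).trans h))
    omega
  have hbound := twistCurve_mulHeight₁_le_of_mem_zmultiples hD hκ hgrowth hT hP
    (AddSubgroup.mem_zmultiples P) hP0
  cases P with
  | zero => exact absurd rfl hP0
  | @some x y h =>
    have hy : y ≠ 0 := fun hy ↦ hPP (Point.add_self_of_Y_eq (by rw [twistCurve_negY, hy, neg_zero]))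
    refine ⟨x / D, by simpa using hbound, (twistCurve_isRoot_iff hD h.1).not.mpr hy,
      ⟨y / D, by rw [(twistCurve_equation_iff hD).mp h.1, sq]⟩⟩

end Twist

lemma Int.eq_of_squarefree_of_isSquare_mul {D D' : ℤ} (hD : Squarefree D) (hD' : Squarefree D')
    (h : IsSquare (D * D')) : D = D' := by
  obtain ⟨c, hc⟩ := h
  obtain ⟨e, rfl⟩ : D ∣ c := (hD.dvd_pow_iff_dvd two_ne_zero).mp ⟨D', by rw [hc]; ring⟩
  have hD'e : D' = D * (e * e) := mul_left_cancel₀ hD.ne_zero (by rw [hc]; ring)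
  obtain he | he := Int.isUnit_iff.mp (hD' e ⟨D, by rw [hD'e]; ring⟩) <;> simp [hD'e, he]

lemma subsingleton_setOf_squarefree_isSquare_mul {w : ℚ} (hw : w ≠ 0) :
    {D : ℤ | Squarefree D ∧ IsSquare ((D : ℚ) * w)}.Subsingleton := by
  rintro D ⟨hD, a, ha⟩ D' ⟨hD', b, hb⟩
  refine Int.eq_of_squarefree_of_isSquare_mul hD hD' (Rat.isSquare_intCast_iff.mp ⟨a * b / w, ?_⟩)
  field_simp
  push_cast
  linear_combination (D' * w) * ha + a * a * hb

/-- If `E : y² = x³ − g₂x − g₃` over `ℚ` has nonzero discriminant, then only finitely many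
squarefree integers `D` are such that the Mordell–Weil group of the quadratic twist
`E_D : y² = x³ − g₂D²x − g₃D³` contains a point of finite order greater than `2`. -/
theorem finite_twists_with_large_torsion (g₂ g₃ : ℚ) (hΔ : (shortCurve g₂ g₃).Δ ≠ 0) :
    {D : ℤ | Squarefree D ∧
      ∃ P : (twistCurve g₂ g₃ (D : ℚ)).toAffine.Point,
        IsOfFinAddOrder P ∧ 2 < addOrderOf P}.Finite := by
  obtain ⟨κ, hκ, hgrowth⟩ := exists_mul_mulHeight₁_pow_le_mulHeight₁_doublingX hΔ
  obtain ⟨T, hT⟩ :=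
    ((finite_setOfPred_isRoot (shortCubic_monic g₂ g₃).ne_zero).image mulHeight₁).bddAbove
  have hfin : {u : ℚ | mulHeight₁ u ≤ max κ⁻¹ T ∧ ¬ (shortCubic g₂ g₃).IsRoot u}.Finite :=
    (Northcott.finite_le (h := mulHeight₁ (K := ℚ)) _).subset fun _ hu ↦ hu.1
  refine (hfin.biUnion fun u hu ↦
    (subsingleton_setOf_squarefree_isSquare_mul hu.2).finite).subset ?_
  rintro D ⟨hD, P, hP, h2P⟩
  obtain ⟨u, hu, hroot, hsq⟩ := twistCurve_exists_isSquare_of_two_lt_addOrderOf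
    (Int.cast_ne_zero.mpr hD.ne_zero) hκ hgrowth (fun u hu ↦ hT ⟨u, hu, rfl⟩) hP h2P
  exact Set.mem_biUnion ⟨hu, hroot⟩ ⟨hD, hsq⟩
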